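/- Let μ be a translation bounded complex measure on the strip S_H with constant C₁, and for τ ∈ ℝ let μ_τ(E) = μ(E − τ) be the translated measure. Then for every twice continuously differentiable compactly supported φ there is a constant C₅, independent of both s and τ, such that |∫_{S_H} e^{2πisz} φ̂^c(z) μ_τ(dz)| ≤ C₅ e^{2π|s|H} for all s, τ ∈ ℝ. -/

import Mathlib

open MeasureTheory Real Complex Set

/-- The c-Fourier transform `φ̂^c(z) = ∫_ℝ φ(t) e^{-2πizt} dt`. -/
noncomputable def cFourier (φ : ℝ → ℂ) (z : ℂ) : ℂ :=
  ∫ t : ℝ, φ t * Complex.exp (-2 * Real.pi * Complex.I * z * t)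

lemma integral_deriv_cs_eq_zero {f : ℝ → ℂ} (hf : ContDiff ℝ 1 f) (h2f : HasCompactSupport f) :
    (∫ x : ℝ, deriv f x) = 0 := by
  have hi : Integrable (deriv f) := ((hf.continuous_deriv le_rfl).integrable_of_hasCompactSupport h2f.deriv)
  rw [← intervalIntegral.integral_Iic_add_Ioi (b := (0:ℝ)) hi.integrableOn hi.integrableOn,
    HasCompactSupport.integral_Iic_deriv_eq hf h2f 0,
    HasCompactSupport.integral_Ioi_deriv_eq hf h2f 0]
  ring

lemma cFourier_deriv {ψ : ℝ → ℂ} (hψ : ContDiff ℝ 1 ψ) (hcs : HasCompactSupport ψ) (w : ℂ) :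
    cFourier (deriv ψ) w = (2 * Real.pi * Complex.I * w) * cFourier ψ w := by
  set c : ℂ := -2 * Real.pi * Complex.I * w with hc
  have hE : ∀ t : ℝ, HasDerivAt (fun t : ℝ => Complex.exp (c * t)) (c * Complex.exp (c * t)) t := by
    intro t
    have h0 : HasDerivAt (fun y : ℝ => c * (y:ℂ)) (c * 1) t :=
      ((hasDerivAt_id t).ofReal_comp).const_mul c
    simpa [mul_comm] using h0.cexp
  have hFd : ∀ t : ℝ, HasDerivAt (fun t : ℝ => ψ t * Complex.exp (c * t))
      (deriv ψ t * Complex.exp (c * t) + ψ t * (c * Complex.exp (c * t))) t := fun t =>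
    ((hψ.differentiable one_ne_zero t).hasDerivAt).mul (hE t)
  have hcont : Continuous fun t : ℝ => Complex.exp (c * t) := by fun_prop
  have hint1 : Integrable (fun t : ℝ => deriv ψ t * Complex.exp (c * t)) :=
    ((hψ.continuous_deriv le_rfl).mul hcont).integrable_of_hasCompactSupport hcs.deriv.mul_right
  have hint2 : Integrable (fun t : ℝ => ψ t * (c * Complex.exp (c * t))) :=
    (hψ.continuous.mul (hcont.const_smul c)).integrable_of_hasCompactSupport hcs.mul_right
  have hzero : (∫ t : ℝ, (deriv ψ t * Complex.exp (c * t) + ψ t * (c * Complex.exp (c * t)))) = 0 := by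
    have hF1 : ContDiff ℝ 1 (fun t : ℝ => ψ t * Complex.exp (c * t)) := by
      apply hψ.mul
      exact (Complex.contDiff_exp.comp ((contDiff_const).mul Complex.ofRealCLM.contDiff)).of_le le_top
    have := integral_deriv_cs_eq_zero hF1 hcs.mul_right
    rw [← this]
    congr 1
    funext t
    exact ((hFd t).deriv).symm
  rw [integral_add hint1 hint2] at hzero
  have h2 : (∫ t : ℝ, ψ t * (c * Complex.exp (c * t))) = c * ∫ t : ℝ, ψ t * Complex.exp (c * t) := by
    rw [← integral_const_mul]
    congr 1; funext t; ring
  have hd : cFourier (deriv ψ) w = ∫ t : ℝ, deriv ψ t * Complex.exp (c * t) := by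
    unfold cFourier; congr 1
  have hp : cFourier ψ w = ∫ t : ℝ, ψ t * Complex.exp (c * t) := by
    unfold cFourier; congr 1
  rw [hd, hp]
  have h3 : (∫ t : ℝ, deriv ψ t * Complex.exp (c * t)) = -(c * ∫ t : ℝ, ψ t * Complex.exp (c * t)) := by
    rw [← h2]; exact eq_neg_of_add_eq_zero_left hzero
  rw [h3, hc]; ring

lemma cFourier_norm_le {ψ : ℝ → ℂ} (hcont : Continuous ψ) (hcs : HasCompactSupport ψ)
    {R H : ℝ} (hR : 0 ≤ R) (hH : 0 ≤ H) (hs : ∀ t, ψ t ≠ 0 → |t| ≤ R) {w : ℂ} (hw : |w.im| ≤ H) :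
    ‖cFourier ψ w‖ ≤ (∫ t : ℝ, ‖ψ t‖) * Real.exp (2 * Real.pi * R * H) := by
  have hpt : ∀ t : ℝ, ‖ψ t * Complex.exp (-2 * Real.pi * Complex.I * w * t)‖
      ≤ ‖ψ t‖ * Real.exp (2 * Real.pi * R * H) := by
    intro t
    rcases eq_or_ne (ψ t) 0 with h | h
    · simp [h, Real.exp_nonneg]
    · have htR : |t| ≤ R := hs t h
      have hre : (-2 * (Real.pi:ℂ) * Complex.I * w * t).re = 2 * Real.pi * t * w.im := by
        simp [Complex.mul_re, Complex.mul_im]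
        ring
      rw [norm_mul, Complex.norm_exp, hre]
      apply mul_le_mul_of_nonneg_left _ (norm_nonneg _)
      apply Real.exp_le_exp.mpr
      calc 2 * Real.pi * t * w.im ≤ |2 * Real.pi * t * w.im| := le_abs_self _
        _ = 2 * Real.pi * |t| * |w.im| := by
            rw [abs_mul, abs_mul, abs_mul]
            simp [_root_.abs_of_nonneg Real.pi_nonneg]
        _ ≤ 2 * Real.pi * R * H := by
            apply mul_le_mul _ hw (abs_nonneg _) (by positivity)
            apply mul_le_mul_of_nonneg_left htR; positivity
  calc ‖cFourier ψ w‖ ≤ ∫ t : ℝ, ‖ψ t * Complex.exp (-2 * Real.pi * Complex.I * w * t)‖ :=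
        norm_integral_le_integral_norm _
    _ ≤ ∫ t : ℝ, ‖ψ t‖ * Real.exp (2 * Real.pi * R * H) := by
        apply integral_mono _ _ hpt
        · exact ((hcont.mul (by fun_prop)).integrable_of_hasCompactSupport hcs.mul_right).norm
        · exact (hcont.integrable_of_hasCompactSupport hcs).norm.mul_const _
    _ = (∫ t : ℝ, ‖ψ t‖) * Real.exp (2 * Real.pi * R * H) := by rw [integral_mul_const]

lemma cFourier_decay {H : ℝ} (hH : 0 < H) {φ : ℝ → ℂ} (hsm : ContDiff ℝ 2 φ)
    (hc : HasCompactSupport φ) :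
    ∃ C₂ : ℝ, 0 < C₂ ∧ ∀ w : ℂ, |w.im| ≤ H → ‖cFourier φ w‖ ≤ C₂ / (1 + w.re ^ 2) := by
  obtain ⟨R0, hR0⟩ := hc.isCompact.isBounded.subset_closedBall 0
  set R := max R0 0 with hRdef
  have hR : 0 ≤ R := le_max_right _ _
  have hsub : tsupport φ ⊆ Metric.closedBall 0 R :=
    hR0.trans (Metric.closedBall_subset_closedBall (le_max_left _ _))
  have habs : ∀ {ψ : ℝ → ℂ}, tsupport ψ ⊆ Metric.closedBall (0:ℝ) R →
      ∀ t, ψ t ≠ 0 → |t| ≤ R := by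
    intro ψ hψ t ht
    have := hψ (subset_tsupport ψ (by simpa using ht))
    simpa [Real.dist_eq] using this
  have hsφ : ∀ t, φ t ≠ 0 → |t| ≤ R := habs hsub
  have hsm2 : ContDiff ℝ (1+1 : ℕ) φ := by exact_mod_cast hsm
  have hd1 : ContDiff ℝ 1 (deriv φ) := (contDiff_succ_iff_deriv.mp (by exact_mod_cast hsm2)).2.2
  have hφ1cs : HasCompactSupport (deriv φ) := hc.deriv
  have hφ2cs : HasCompactSupport (deriv (deriv φ)) := hφ1cs.deriv
  have hφ2cont : Continuous (deriv (deriv φ)) := hd1.continuous_deriv le_rfl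
  have hts1 : tsupport (deriv φ) ⊆ tsupport φ :=
    closure_minimal support_deriv_subset (isClosed_tsupport φ)
  have hts2 : tsupport (deriv (deriv φ)) ⊆ tsupport φ :=
    (closure_minimal support_deriv_subset (isClosed_tsupport _)).trans hts1
  have hsφ2 : ∀ t, deriv (deriv φ) t ≠ 0 → |t| ≤ R := habs (hts2.trans hsub)
  set K0 : ℝ := ∫ t : ℝ, ‖φ t‖ with hK0
  set K2 : ℝ := ∫ t : ℝ, ‖deriv (deriv φ) t‖ with hK2
  set E : ℝ := Real.exp (2 * Real.pi * R * H) with hE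
  have hK0n : 0 ≤ K0 := integral_nonneg fun t => norm_nonneg _
  have hK2n : 0 ≤ K2 := integral_nonneg fun t => norm_nonneg _
  have hEpos : 0 < E := Real.exp_pos _
  have hb0 : ∀ w : ℂ, |w.im| ≤ H → ‖cFourier φ w‖ ≤ K0 * E :=
    fun w hw => cFourier_norm_le hsm.continuous hc hR hH.le hsφ hw
  have hb2 : ∀ w : ℂ, |w.im| ≤ H → ‖cFourier (deriv (deriv φ)) w‖ ≤ K2 * E :=
    fun w hw => cFourier_norm_le hφ2cont hφ2cs hR hH.le hsφ2 hw
  have hiter : ∀ w : ℂ, cFourier (deriv (deriv φ)) w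
      = (2 * Real.pi * Complex.I * w) ^ 2 * cFourier φ w := by
    intro w
    rw [cFourier_deriv hd1 hφ1cs, cFourier_deriv (hsm.of_le one_le_two) hc]
    ring
  set Q : ℝ := K2 * E / (4 * Real.pi ^ 2) with hQ
  have hQn : 0 ≤ Q := by positivity
  set M : ℝ := max (K0 * E) Q with hM
  have hMn : 0 ≤ M := le_trans hQn (le_max_right _ _)
  refine ⟨2 * (M + 1), by positivity, ?_⟩
  intro w hw
  have hx2 : (0:ℝ) < 1 + w.re ^ 2 := by positivity
  rcases le_or_gt |w.re| 1 with h1 | h1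
  · have h2 : 1 + w.re ^ 2 ≤ 2 := by nlinarith [_root_.sq_abs w.re, abs_nonneg w.re]
    rw [le_div_iff₀ hx2]
    calc ‖cFourier φ w‖ * (1 + w.re ^ 2) ≤ (K0 * E) * 2 :=
          mul_le_mul (hb0 w hw) h2 hx2.le (by positivity)
      _ ≤ 2 * (M + 1) := by nlinarith [le_max_left (K0 * E) Q]
  · have hxpos : (0:ℝ) < w.re ^ 2 := by nlinarith [abs_nonneg w.re, _root_.sq_abs w.re]
    have h1' : (1:ℝ) ≤ w.re ^ 2 := by nlinarith [_root_.sq_abs w.re]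
    have hwne : w ≠ 0 := by
      intro h; rw [h] at h1; simp at h1; linarith
    have hcne : (2 * (Real.pi:ℂ) * Complex.I * w) ≠ 0 := by
      apply mul_ne_zero (mul_ne_zero (mul_ne_zero two_ne_zero ?_) Complex.I_ne_zero) hwne
      exact_mod_cast Real.pi_ne_zero
    have hkey : ‖cFourier φ w‖ * (4 * Real.pi ^ 2 * w.re ^ 2) ≤ K2 * E := by
      have hnorm : 4 * Real.pi ^ 2 * w.re ^ 2 ≤ ‖(2 * (Real.pi:ℂ) * Complex.I * w) ^ 2‖ := by
        rw [norm_pow]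
        have h5 : ‖2 * (Real.pi:ℂ) * Complex.I * w‖ = 2 * Real.pi * ‖w‖ := by
          simp [norm_mul, Complex.norm_real, _root_.abs_of_nonneg Real.pi_nonneg]
        rw [h5]
        have h6 : |w.re| ≤ ‖w‖ := Complex.abs_re_le_norm w
        nlinarith [norm_nonneg w, abs_nonneg w.re, _root_.sq_abs w.re, Real.pi_pos,
          mul_self_le_mul_self (abs_nonneg w.re) h6]
      calc ‖cFourier φ w‖ * (4 * Real.pi ^ 2 * w.re ^ 2)
          ≤ ‖cFourier φ w‖ * ‖(2 * (Real.pi:ℂ) * Complex.I * w) ^ 2‖ := by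
            exact mul_le_mul_of_nonneg_left hnorm (norm_nonneg _)
        _ = ‖(2 * (Real.pi:ℂ) * Complex.I * w) ^ 2 * cFourier φ w‖ := by
            rw [norm_mul]; ring
        _ = ‖cFourier (deriv (deriv φ)) w‖ := by rw [hiter w]
        _ ≤ K2 * E := hb2 w hw
    rw [le_div_iff₀ hx2]
    have hQeq : K2 * E = Q * (4 * Real.pi ^ 2) := by
      rw [hQ]; field_simp
    have hQM : Q ≤ M := le_max_right _ _
    have hNx : ‖cFourier φ w‖ * w.re ^ 2 ≤ Q := by
      rw [hQ, le_div_iff₀ (by positivity)]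
      nlinarith [hkey]
    have hN1 : ‖cFourier φ w‖ ≤ ‖cFourier φ w‖ * w.re ^ 2 := by
      nlinarith [norm_nonneg (cFourier φ w)]
    nlinarith [hNx, hN1, hQM]

lemma strip_lintegral_bound {C₁ H : ℝ} (hC₁ : 0 < C₁) (μvar : Measure ℂ)
    (hsupp : μvar {z : ℂ | H < |z.im|} = 0)
    (htb : ∀ s : ℝ, μvar {z : ℂ | |z.im| ≤ H ∧ s ≤ z.re ∧ z.re ≤ s + 1} ≤ ENNReal.ofReal C₁) :
    ∃ S : ℝ, 0 < S ∧ ∀ a : ℝ,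
      (∫⁻ z, ENNReal.ofReal (1 / (1 + (z.re + a) ^ 2)) ∂μvar) ≤ ENNReal.ofReal (C₁ * S) := by
  classical
  set b : ℤ → ℝ := fun n => 1 / (1 + (max (|(n:ℝ)| - 1) 0) ^ 2) with hb
  have hbn : ∀ n, 0 ≤ b n := fun n => by positivity
  have hbsum : Summable b := by
    apply Summable.of_norm_bounded_eventually (g := fun n : ℤ => 4 * (1 / (n:ℝ) ^ 2))
    · exact (summable_one_div_int_pow.mpr one_lt_two).mul_left 4
    · apply Set.Finite.subset (Set.finite_Icc (-1:ℤ) 1)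
      intro n hn
      simp only [Set.mem_compl_iff, Set.mem_setOf_eq, not_le] at hn
      by_contra hmem
      simp only [Set.mem_Icc, not_and_or, not_le] at hmem
      have h2 : (2:ℝ) ≤ |(n:ℝ)| := by
        rcases hmem with h | h
        · have hn2 : n ≤ -2 := by omega
          have : (n:ℝ) ≤ -2 := by exact_mod_cast hn2
          rw [_root_.abs_of_nonpos (by linarith)]; linarith
        · have hn2 : 2 ≤ n := by omega
          have : (2:ℝ) ≤ (n:ℝ) := by exact_mod_cast hn2
          rw [_root_.abs_of_nonneg (by linarith)]; linarith
      have hmax : max (|(n:ℝ)| - 1) 0 = |(n:ℝ)| - 1 := max_eq_left (by linarith)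
      have hnormb : ‖b n‖ = b n := Real.norm_of_nonneg (hbn n)
      rw [hnormb, hb] at hn
      simp only at hn
      rw [hmax] at hn
      have hd : (0:ℝ) < 1 + (|(n:ℝ)| - 1) ^ 2 := by positivity
      have hnsq : (0:ℝ) < (n:ℝ) ^ 2 := by nlinarith [_root_.sq_abs (n:ℝ)]
      rw [mul_one_div, div_lt_div_iff₀ hnsq hd] at hn
      nlinarith [hn, _root_.sq_abs (n:ℝ)]
  set S : ℝ := ∑' n, b n with hS
  have hSpos : 0 < S := by
    have h0 : b 0 = 1 := by simp [hb]
    have hle : b 0 ≤ S := by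
      simpa using Summable.sum_le_tsum ({0} : Finset ℤ) (fun j _ => hbn j) hbsum
    rw [h0] at hle; linarith
  refine ⟨S, hSpos, ?_⟩
  intro a
  set A : ℤ → Set ℂ := fun n => {z : ℂ | (n:ℝ) ≤ z.re + a ∧ z.re + a < n + 1} with hA
  have hmeas : ∀ n, MeasurableSet (A n) := by
    intro n
    have : A n = (fun z : ℂ => z.re + a) ⁻¹' Set.Ico (n:ℝ) (n+1) := by
      ext z; simp [hA, Set.mem_Ico]
    rw [this]
    exact (Complex.measurable_re.add_const a) measurableSet_Ico
  have hdisj : Pairwise (Function.onFun Disjoint A) := by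
    intro m n hmn
    rw [Function.onFun, Set.disjoint_left]
    intro z hzm hzn
    apply hmn
    have h1 : ⌊z.re + a⌋ = m := (Int.floor_eq_iff).mpr ⟨hzm.1, hzm.2⟩
    have h2 : ⌊z.re + a⌋ = n := (Int.floor_eq_iff).mpr ⟨hzn.1, hzn.2⟩
    rw [← h1, h2]
  have hcover : (⋃ n, A n) = Set.univ := by
    ext z
    simp only [Set.mem_iUnion, Set.mem_univ, iff_true]
    exact ⟨⌊z.re + a⌋, Int.floor_le _, Int.lt_floor_add_one _⟩
  have hAn : ∀ n, μvar (A n) ≤ ENNReal.ofReal C₁ := by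
    intro n
    have hsub : A n ⊆ {z : ℂ | |z.im| ≤ H ∧ ((n:ℝ) - a) ≤ z.re ∧ z.re ≤ ((n:ℝ) - a) + 1}
        ∪ {z : ℂ | H < |z.im|} := by
      intro z hz
      rcases le_or_gt |z.im| H with h | h
      · left; exact ⟨h, by linarith [hz.1], by linarith [hz.2]⟩
      · right; exact h
    calc μvar (A n) ≤ μvar _ := measure_mono hsub
      _ ≤ μvar {z : ℂ | |z.im| ≤ H ∧ ((n:ℝ) - a) ≤ z.re ∧ z.re ≤ ((n:ℝ) - a) + 1}
          + μvar {z : ℂ | H < |z.im|} := measure_union_le _ _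
      _ ≤ ENNReal.ofReal C₁ + 0 := add_le_add (htb _) (le_of_eq hsupp)
      _ = ENNReal.ofReal C₁ := add_zero _
  have hptA : ∀ n, ∀ z ∈ A n, ENNReal.ofReal (1 / (1 + (z.re + a) ^ 2)) ≤ ENNReal.ofReal (b n) := by
    intro n z hz
    apply ENNReal.ofReal_le_ofReal
    rw [hb]
    simp only
    have hm : max (|(n:ℝ)| - 1) 0 ≤ |z.re + a| := by
      apply max_le _ (abs_nonneg _)
      rcases le_or_gt (0:ℝ) (n:ℝ) with h | h
      · have h1 : (n:ℝ) ≤ z.re + a := hz.1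
        rw [_root_.abs_of_nonneg h]
        have : 0 ≤ z.re + a := le_trans h h1
        rw [_root_.abs_of_nonneg this]; linarith
      · have hn0 : n < 0 := by exact_mod_cast h
        have hn1 : (n:ℝ) + 1 ≤ 0 := by
          have : n + 1 ≤ 0 := by omega
          exact_mod_cast this
        have h2 : z.re + a < 0 := lt_of_lt_of_le hz.2 hn1
        rw [_root_.abs_of_nonpos h.le, _root_.abs_of_nonpos h2.le]
        linarith [hz.2]
    apply div_le_div_of_nonneg_left one_pos.le (by positivity)
    have : (max (|(n:ℝ)| - 1) 0) ^ 2 ≤ (z.re + a) ^ 2 := by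
      rw [← _root_.sq_abs (z.re + a)]
      exact pow_le_pow_left₀ (le_max_right _ _) hm 2
    linarith
  calc (∫⁻ z, ENNReal.ofReal (1 / (1 + (z.re + a) ^ 2)) ∂μvar)
      = ∫⁻ z in (⋃ n, A n), ENNReal.ofReal (1 / (1 + (z.re + a) ^ 2)) ∂μvar := by
        rw [hcover, setLIntegral_univ]
    _ = ∑' n, ∫⁻ z in A n, ENNReal.ofReal (1 / (1 + (z.re + a) ^ 2)) ∂μvar :=
        lintegral_iUnion hmeas hdisj _
    _ ≤ ∑' n, ENNReal.ofReal (b n) * ENNReal.ofReal C₁ := by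
        apply ENNReal.tsum_le_tsum
        intro n
        calc (∫⁻ z in A n, ENNReal.ofReal (1 / (1 + (z.re + a) ^ 2)) ∂μvar)
            ≤ ∫⁻ _ in A n, ENNReal.ofReal (b n) ∂μvar :=
              setLIntegral_mono' (hmeas n) (hptA n)
          _ = ENNReal.ofReal (b n) * μvar (A n) := setLIntegral_const _ _
          _ ≤ ENNReal.ofReal (b n) * ENNReal.ofReal C₁ :=
              mul_le_mul_right (hAn n) _
    _ = (∑' n, ENNReal.ofReal (b n)) * ENNReal.ofReal C₁ := ENNReal.tsum_mul_right
    _ = ENNReal.ofReal (C₁ * S) := by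
        rw [← ENNReal.ofReal_tsum_of_nonneg hbn hbsum, ← hS,
          ← ENNReal.ofReal_mul hSpos.le, mul_comm]

/-- let `μ` be a translation bounded complex measure on the strip `S_H`,
given in polar form `dμ = g d|μ|` with `|g| = 1` and `|μ| = μvar`.  For `τ ∈ ℝ` the
translate `μ_τ(E) = μ(E - τ)` satisfies `∫ F dμ_τ = ∫ F(z+τ) dμ(z)`.  Then for every
`C²` compactly supported `φ` there is a constant `C₅` independent of `s` and `τ` with
`|∫ e^{2πisz} φ̂^c(z) μ_τ(dz)| ≤ C₅ e^{2π|s|H}`. -/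
theorem stmt6 (H C₁ : ℝ) (hH : 0 < H) (hC₁ : 0 < C₁)
    (μvar : Measure ℂ) (g : ℂ → ℂ) (hg : ∀ z, ‖g z‖ = 1) (hgm : Measurable g)
    (hsupp : μvar {z : ℂ | H < |z.im|} = 0)
    (htb : ∀ s : ℝ, μvar {z : ℂ | |z.im| ≤ H ∧ s ≤ z.re ∧ z.re ≤ s + 1}
      ≤ ENNReal.ofReal C₁)
    (φ : ℝ → ℂ) (hsm : ContDiff ℝ 2 φ) (hc : HasCompactSupport φ) :
    ∃ C₅ : ℝ, 0 < C₅ ∧ ∀ s τ : ℝ,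
      ‖∫ z, Complex.exp (2 * Real.pi * Complex.I * s * (z + τ)) * cFourier φ (z + τ) * g z ∂μvar‖
        ≤ C₅ * Real.exp (2 * Real.pi * |s| * H) := by
  obtain ⟨C₂, hC₂, hdec⟩ := cFourier_decay hH hsm hc
  obtain ⟨S, hSpos, hSB⟩ := strip_lintegral_bound hC₁ μvar hsupp htb
  refine ⟨C₂ * (C₁ * S) + 1, by positivity, ?_⟩
  intro s τ
  set c : ℝ := Real.exp (2 * Real.pi * |s| * H) * C₂ with hcdef
  have hcpos : 0 < c := by positivity
  have hae : ∀ᵐ z ∂μvar, |z.im| ≤ H := by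
    rw [ae_iff]
    have hset : {z : ℂ | ¬ |z.im| ≤ H} = {z : ℂ | H < |z.im|} := by ext z; simp [not_le]
    rw [hset]; exact hsupp
  have hpt : ∀ z : ℂ, |z.im| ≤ H →
      ENNReal.ofReal ‖Complex.exp (2 * Real.pi * Complex.I * s * (z + τ))
          * cFourier φ (z + τ) * g z‖
        ≤ ENNReal.ofReal (c * (1 / (1 + (z.re + τ) ^ 2))) := by
    intro z hz
    apply ENNReal.ofReal_le_ofReal
    rw [norm_mul, norm_mul, hg z, mul_one]
    have h1 : ‖Complex.exp (2 * (Real.pi:ℂ) * Complex.I * s * (z + τ))‖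
        ≤ Real.exp (2 * Real.pi * |s| * H) := by
      rw [Complex.norm_exp]
      apply Real.exp_le_exp.mpr
      have hre : (2 * (Real.pi:ℂ) * Complex.I * s * (z + τ)).re
          = -(2 * Real.pi * s * z.im) := by
        simp [Complex.mul_re, Complex.mul_im, Complex.add_re, Complex.add_im]
      rw [hre]
      calc -(2 * Real.pi * s * z.im) ≤ |2 * Real.pi * s * z.im| := neg_le_abs _
        _ = 2 * Real.pi * |s| * |z.im| := by
            rw [abs_mul, abs_mul, abs_mul]
            simp [_root_.abs_of_nonneg Real.pi_nonneg]
        _ ≤ 2 * Real.pi * |s| * H := mul_le_mul_of_nonneg_left hz (by positivity)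
    have h2 : ‖cFourier φ (z + τ)‖ ≤ C₂ * (1 / (1 + (z.re + τ) ^ 2)) := by
      have him : |(z + (τ:ℂ)).im| ≤ H := by simpa using hz
      have hd := hdec (z + τ) him
      have hre2 : (z + (τ:ℂ)).re = z.re + τ := by simp
      rw [hre2] at hd
      rw [mul_one_div]; exact hd
    calc ‖Complex.exp (2 * (Real.pi:ℂ) * Complex.I * s * (z + τ))‖ * ‖cFourier φ (z + τ)‖
        ≤ Real.exp (2 * Real.pi * |s| * H) * (C₂ * (1 / (1 + (z.re + τ) ^ 2))) :=
          mul_le_mul h1 h2 (norm_nonneg _) (Real.exp_nonneg _)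
      _ = c * (1 / (1 + (z.re + τ) ^ 2)) := by rw [hcdef]; ring
  calc ‖∫ z, Complex.exp (2 * Real.pi * Complex.I * s * (z + τ))
          * cFourier φ (z + τ) * g z ∂μvar‖
      ≤ (∫⁻ z, ENNReal.ofReal ‖Complex.exp (2 * Real.pi * Complex.I * s * (z + τ))
          * cFourier φ (z + τ) * g z‖ ∂μvar).toReal := norm_integral_le_lintegral_norm _
    _ ≤ (ENNReal.ofReal c * ENNReal.ofReal (C₁ * S)).toReal := by
        apply ENNReal.toReal_mono (ENNReal.mul_ne_top ENNReal.ofReal_ne_top ENNReal.ofReal_ne_top)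
        calc (∫⁻ z, ENNReal.ofReal ‖Complex.exp (2 * Real.pi * Complex.I * s * (z + τ))
                * cFourier φ (z + τ) * g z‖ ∂μvar)
            ≤ ∫⁻ z, ENNReal.ofReal (c * (1 / (1 + (z.re + τ) ^ 2))) ∂μvar := by
              apply lintegral_mono_ae
              filter_upwards [hae] with z hz using hpt z hz
          _ = ∫⁻ z, ENNReal.ofReal c * ENNReal.ofReal (1 / (1 + (z.re + τ) ^ 2)) ∂μvar := by
              congr 1; funext z; rw [ENNReal.ofReal_mul hcpos.le]
          _ = ENNReal.ofReal c * ∫⁻ z, ENNReal.ofReal (1 / (1 + (z.re + τ) ^ 2)) ∂μvar :=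
              lintegral_const_mul' _ _ ENNReal.ofReal_ne_top
          _ ≤ ENNReal.ofReal c * ENNReal.ofReal (C₁ * S) := mul_le_mul_right (hSB τ) _
    _ = c * (C₁ * S) := by
        rw [← ENNReal.ofReal_mul hcpos.le, ENNReal.toReal_ofReal (by positivity)]
    _ ≤ (C₂ * (C₁ * S) + 1) * Real.exp (2 * Real.pi * |s| * H) := by
        rw [hcdef]
        have hX : 0 ≤ C₂ * (C₁ * S) := by positivity
        nlinarith [Real.exp_pos (2 * Real.pi * |s| * H), hX]
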